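/- arXiv:1301.4610 — 3 statements merged into one kernel-verified Lean document; each statement's English description precedes it below -/
import Mathlib

section
/- Let κ ∈ ℂ with |κ| < 1 and let 𝓜 ∈ ℂ satisfy |(𝓜 - i)/(𝓜 + i)| ≤ |κ| (with 𝓜 ≠ -i). Then (1-|κ|)/(1+|κ|) ≤ Im 𝓜 ≤ (1+|κ|)/(1-|κ|). -/
/-! Writing `𝓜 = x + i y`, the hypothesis says `x² + (y - 1)² ≤ |κ|² (x² + (y + 1)²)`. Since
`|κ| ≤ 1` the `x²` terms can be dropped, leaving `|y - 1| ≤ |κ| |y + 1|`, a pair of linear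
inequalities in `y` whose solution set is the stated interval. -/

open Complex

theorem abs_im_sub_one_le_of_norm_sub_I_le {z : ℂ} {k : ℝ} (hk₀ : 0 ≤ k) (hk₁ : k ≤ 1)
    (h : ‖z - I‖ ≤ k * ‖z + I‖) : |z.im - 1| ≤ k * |z.im + 1| := by
  have hsq : ‖z - I‖ ^ 2 ≤ (k * ‖z + I‖) ^ 2 := pow_le_pow_left₀ (norm_nonneg _) h 2
  simp only [mul_pow, Complex.sq_norm, normSq_apply, sub_re, sub_im, add_re, add_im, I_re, I_im,
    sub_zero, add_zero] at hsq
  have hk_sq : k ^ 2 ≤ 1 := pow_le_one₀ hk₀ hk₁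
  have hre : k ^ 2 * (z.re * z.re) ≤ z.re * z.re :=
    mul_le_of_le_one_left (mul_self_nonneg _) hk_sq
  rw [← abs_of_nonneg hk₀, ← abs_mul, ← sq_le_sq]
  nlinarith

theorem div_le_and_le_div_of_abs_sub_one_le {k y : ℝ} (hk : k < 1)
    (h : |y - 1| ≤ k * |y + 1|) : (1 - k) / (1 + k) ≤ y ∧ y ≤ (1 + k) / (1 - k) := by
  have hy : 0 < y + 1 := by
    by_contra! hy
    rw [abs_of_nonpos hy, abs_of_nonpos (by linarith)] at h
    nlinarith
  rw [abs_of_pos hy, abs_le] at h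
  obtain ⟨hlow, hupp⟩ := h
  have hk₀ : 0 ≤ k := by nlinarith
  constructor
  · rw [div_le_iff₀ (by linarith)]
    linarith
  · rw [le_div_iff₀ (by linarith)]
    linarith

theorem imaginary_part_bounds
    (κ 𝓜 : ℂ) (hκ : ‖κ‖ < 1) (h𝓜 : 𝓜 ≠ -I)
    (h : ‖(𝓜 - I) / (𝓜 + I)‖ ≤ ‖κ‖) :
    (1 - ‖κ‖) / (1 + ‖κ‖) ≤ 𝓜.im ∧
      𝓜.im ≤ (1 + ‖κ‖) / (1 - ‖κ‖) := by
  have hne : 𝓜 + I ≠ 0 := fun h₀ => h𝓜 (eq_neg_of_add_eq_zero_left h₀)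
  rw [norm_div, div_le_iff₀ (norm_pos_iff.mpr hne)] at h
  exact div_le_and_le_div_of_abs_sub_one_le hκ
    (abs_im_sub_one_le_of_norm_sub_I_le (norm_nonneg κ) hκ.le h)
end

section
/- Let μ be a Borel measure on ℝ with ∫ (1+λ²)⁻¹ dμ = 1, let λ₀ ∈ ℝ with μ({λ₀}) > 0, and suppose μ((λ₀-ε, λ₀) ∪ (λ₀, λ₀+ε)) = 0 for some ε > 0. Then for every u ∈ L²(ℝ, dμ) with ∫ λ²|u|² dμ < ∞ and ∫ u dμ = 0, one has |u(λ₀)|·μ({λ₀}) = |∫_{|λ-λ₀|≥ε} u(λ) dμ(λ)|, and there is a constant C (independent of u) with ‖u‖ ≤ C‖(λ - λ₀)u‖ in L²(ℝ, dμ). -/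
open MeasureTheory Complex

set_option maxHeartbeats 1000000 in
theorem quasi_regular_with_atom
    (μ : Measure ℝ)
    (hnorm : ∫ x, (1 + x ^ 2)⁻¹ ∂μ = 1)
    (lam0 : ℝ) (ε : ℝ) (hε : 0 < ε)
    (hatom : 0 < μ {lam0})
    (hgap : μ (Set.Ioo (lam0 - ε) lam0 ∪ Set.Ioo lam0 (lam0 + ε)) = 0) :
    ∃ C > (0 : ℝ), ∀ u : ℝ → ℂ,
      MeasureTheory.MemLp u 2 μ →
      Integrable (fun x => x ^ 2 * (‖u x‖) ^ 2) μ →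
      Integrable u μ → (∫ x, u x ∂μ) = 0 →
      (‖u lam0‖ * (μ {lam0}).toReal =
          ‖∫ x in {x : ℝ | ε ≤ |x - lam0|}, u x ∂μ‖ ∧
        Real.sqrt (∫ x, (‖u x‖) ^ 2 ∂μ) ≤
          C * Real.sqrt (∫ x, (‖((x : ℂ) - lam0) * u x‖) ^ 2 ∂μ)) := by
  set S : Set ℝ := {x : ℝ | ε ≤ |x - lam0|} with hSdef
  have hSmeas : MeasurableSet S := by
    have : S = (fun x : ℝ => |x - lam0|) ⁻¹' Set.Ici ε := rfl
    rw [this]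
    exact ((measurable_id.sub measurable_const).abs) measurableSet_Ici
  have hint1 : Integrable (fun x : ℝ => (1 + x ^ 2)⁻¹) μ := by
    by_contra h
    rw [integral_undef h] at hnorm
    norm_num at hnorm
  have hfin : μ {lam0} < ⊤ := by
    have h1 : (∫⁻ x in {lam0}, ‖(1 + x ^ 2)⁻¹‖₊ ∂μ) < ⊤ := by
      refine lt_of_le_of_lt (lintegral_mono_set (Set.subset_univ _)) ?_
      rw [Measure.restrict_univ]
      exact hint1.2
    rw [lintegral_singleton] at h1
    have hne : (‖(1 + lam0 ^ 2)⁻¹‖₊ : ENNReal) ≠ 0 := by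
      simp only [ne_eq, ENNReal.coe_eq_zero, nnnorm_eq_zero]
      have : (0:ℝ) < (1 + lam0 ^ 2)⁻¹ := by positivity
      exact this.ne'
    by_contra h
    rw [not_lt, top_le_iff] at h
    rw [h, ENNReal.mul_top hne] at h1
    exact absurd h1 (by simp)
  set m := (μ {lam0}).toReal with hmdef
  have hm : 0 < m := ENNReal.toReal_pos hatom.ne' hfin.ne
  have hsub : Sᶜ \ {lam0} ⊆ Set.Ioo (lam0 - ε) lam0 ∪ Set.Ioo lam0 (lam0 + ε) := by
    intro x hx
    obtain ⟨hx1, hx2⟩ := hx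
    simp only [hSdef, Set.mem_compl_iff, Set.mem_setOf_eq, not_le] at hx1
    simp only [Set.mem_singleton_iff] at hx2
    have h := abs_lt.mp hx1
    rcases lt_or_gt_of_ne hx2 with hlt | hgt
    · exact Or.inl ⟨by linarith [h.1], hlt⟩
    · exact Or.inr ⟨hgt, by linarith [h.2]⟩
  have hae : (Sᶜ : Set ℝ) =ᵐ[μ] ({lam0} : Set ℝ) := by
    refine MeasureTheory.ae_eq_set.2 ?_
    refine ⟨measure_mono_null hsub hgap, ?_⟩
    have h2 : ({lam0} : Set ℝ) \ Sᶜ = ∅ := by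
      rw [Set.diff_eq_empty]
      intro x hx
      simp only [Set.mem_singleton_iff] at hx
      simp [hSdef, hx, not_le, hε]
    rw [h2]; simp
  set K : ℝ := (1 + 2 * lam0 ^ 2) / ε ^ 2 + 2 with hKdef
  have hK : 0 < K := by positivity
  have key : ∀ x ∈ S, ((x - lam0) ^ 2)⁻¹ ≤ K * (1 + x ^ 2)⁻¹ := by
    intro x hx
    have hxS : ε ≤ |x - lam0| := by rw [hSdef] at hx; exact hx
    have hx2 : ε ^ 2 ≤ (x - lam0) ^ 2 := by
      nlinarith [abs_nonneg (x - lam0), _root_.sq_abs (x - lam0)]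
    have h2 : (0:ℝ) < 1 + x ^ 2 := by positivity
    have h1 : (0:ℝ) < (x - lam0) ^ 2 := lt_of_lt_of_le (by positivity) hx2
    have hbound : 1 + x ^ 2 ≤ K * (x - lam0) ^ 2 := by
      rw [hKdef]
      have hε2 : (0:ℝ) < ε ^ 2 := by positivity
      have : (1 + 2 * lam0 ^ 2) ≤ (1 + 2 * lam0 ^ 2) / ε ^ 2 * (x - lam0) ^ 2 := by
        rw [div_mul_eq_mul_div, le_div_iff₀ hε2]
        nlinarith
      nlinarith [sq_nonneg (x - 2 * lam0)]
    rw [show K * (1 + x ^ 2)⁻¹ = K / (1 + x ^ 2) by ring, le_div_iff₀ h2]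
    calc ((x - lam0) ^ 2)⁻¹ * (1 + x ^ 2)
        ≤ ((x - lam0) ^ 2)⁻¹ * (K * (x - lam0) ^ 2) :=
          mul_le_mul_of_nonneg_left hbound (by positivity)
      _ = K := by rw [mul_left_comm, inv_mul_cancel₀ h1.ne', mul_one]
  have hfsq_meas : Measurable (fun x : ℝ => ((x - lam0) ^ 2)⁻¹) :=
    (((measurable_id.sub measurable_const).pow_const 2).inv)
  have hfsq_int : IntegrableOn (fun x : ℝ => ((x - lam0) ^ 2)⁻¹) S μ := by
    refine Integrable.mono' ((hint1.const_mul K).integrableOn) hfsq_meas.aestronglyMeasurable ?_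
    rw [ae_restrict_iff' hSmeas]
    filter_upwards with x hx
    rw [Real.norm_of_nonneg (by positivity)]
    exact key x hx
  have hfsq_le : ∫ x in S, ((x - lam0) ^ 2)⁻¹ ∂μ ≤ K := by
    calc ∫ x in S, ((x - lam0) ^ 2)⁻¹ ∂μ
        ≤ ∫ x in S, K * (1 + x ^ 2)⁻¹ ∂μ :=
          setIntegral_mono_on hfsq_int ((hint1.const_mul K).integrableOn) hSmeas key
      _ ≤ ∫ x, K * (1 + x ^ 2)⁻¹ ∂μ := by
          refine setIntegral_le_integral (hint1.const_mul K) ?_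
          filter_upwards with x
          positivity
      _ = K := by rw [integral_const_mul, hnorm, mul_one]
  clear_value S m K
  refine ⟨Real.sqrt (ε⁻¹ ^ 2 + K / m), Real.sqrt_pos.mpr (by positivity), ?_⟩
  intro u hu hx2 hui hu0
  set w : ℝ → ℂ := fun x => ((x : ℂ) - lam0) * u x with hwdef
  have hnormw : ∀ x : ℝ, ‖w x‖ = |x - lam0| * ‖u x‖ := by
    intro x
    rw [hwdef]
    simp only [norm_mul]
    congr 1
    rw [show ((x : ℂ) - lam0) = ((x - lam0 : ℝ) : ℂ) by push_cast; ring, Complex.norm_real,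
      Real.norm_eq_abs]
  have asm_w : AEStronglyMeasurable w μ :=
    ((Complex.continuous_ofReal.sub continuous_const).aestronglyMeasurable).mul hu.1
  have hu2 : Integrable (fun x => ‖u x‖ ^ 2) μ :=
    (memLp_two_iff_integrable_sq_norm hu.1).1 hu
  have hw2 : Integrable (fun x => ‖w x‖ ^ 2) μ := by
    refine Integrable.mono' (((hx2.const_mul 2).add ((hu2.const_mul (2 * lam0 ^ 2)))))
      ((asm_w.norm.aemeasurable.pow_const 2).aestronglyMeasurable) ?_
    filter_upwards with x
    simp only [Pi.add_apply]
    rw [Real.norm_of_nonneg (by positivity), hnormw x, mul_pow, _root_.sq_abs]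
    nlinarith [mul_nonneg (sq_nonneg (x + lam0)) (sq_nonneg ‖u x‖)]
  set V : ℝ := ∫ x, ‖w x‖ ^ 2 ∂μ with hVdef
  have hV : 0 ≤ V := integral_nonneg (fun x => by positivity)
  clear_value w V
  -- integral over the complement equals value at the atom
  have hBu : ∫ x in Sᶜ, u x ∂μ = m • u lam0 := by
    rw [setIntegral_congr_set hae, integral_singleton, measureReal_def, hmdef]
  have hsplit := integral_add_compl hSmeas hui
  rw [hu0] at hsplit
  have hSu : ∫ x in S, u x ∂μ = -(m • u lam0) := by
    rw [← hBu]
    linear_combination hsplit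
  have part1 : ‖u lam0‖ * m = ‖∫ x in S, u x ∂μ‖ := by
    rw [hSu, norm_neg, norm_smul, Real.norm_of_nonneg hm.le, mul_comm]
  refine ⟨part1, ?_⟩
  -- Cauchy-Schwarz on S
  have hmem_f : MemLp (fun x : ℝ => |x - lam0|⁻¹) 2 (μ.restrict S) := by
    refine (memLp_two_iff_integrable_sq (f := fun x : ℝ => |x - lam0|⁻¹)
      ((measurable_id.sub measurable_const).abs.inv.aestronglyMeasurable)).2 ?_
    simp only [inv_pow, _root_.sq_abs]
    exact hfsq_int
  have hmem_g : MemLp (fun x : ℝ => ‖w x‖) 2 (μ.restrict S) :=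
    (memLp_two_iff_integrable_sq (asm_w.norm.restrict)).2 (hw2.integrableOn)
  have h2e : ENNReal.ofReal (2:ℝ) = 2 := by norm_num
  have hCS := integral_mul_le_Lp_mul_Lq_of_nonneg (μ := μ.restrict S)
    Real.HolderConjugate.two_two
    (Filter.Eventually.of_forall fun x => inv_nonneg.mpr (abs_nonneg _))
    (Filter.Eventually.of_forall fun x => norm_nonneg _)
    (h2e ▸ hmem_f) (h2e ▸ hmem_g)
  have h2p : ∀ y : ℝ, y ^ (2:ℝ) = y ^ (2:ℕ) := fun y => by
    rw [show (2:ℝ) = ((2:ℕ):ℝ) by norm_num, Real.rpow_natCast]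
  simp only [h2p] at hCS
  have hgS : ∫ x in S, ‖w x‖ ^ 2 ∂μ ≤ V := by
    rw [hVdef]
    refine setIntegral_le_integral hw2 ?_
    filter_upwards with x
    positivity
  have hfS0 : 0 ≤ ∫ x in S, (|x - lam0|⁻¹) ^ 2 ∂μ :=
    integral_nonneg fun x => by positivity
  have hgS0 : 0 ≤ ∫ x in S, ‖w x‖ ^ 2 ∂μ :=
    integral_nonneg fun x => by positivity
  have hfS : ∫ x in S, (|x - lam0|⁻¹) ^ 2 ∂μ ≤ K := by
    simp only [inv_pow, _root_.sq_abs]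
    exact hfsq_le
  have hSnorm : ∫ x in S, ‖u x‖ ∂μ = ∫ x in S, |x - lam0|⁻¹ * ‖w x‖ ∂μ := by
    refine setIntegral_congr_fun hSmeas fun x hx => ?_
    have hxS : ε ≤ |x - lam0| := by rw [hSdef] at hx; exact hx
    have hxne : |x - lam0| ≠ 0 := ne_of_gt (lt_of_lt_of_le hε hxS)
    rw [hnormw x, ← mul_assoc, inv_mul_cancel₀ hxne, one_mul]
  have hchain : m * ‖u lam0‖ ≤ Real.sqrt K * Real.sqrt V := by
    calc m * ‖u lam0‖ = ‖∫ x in S, u x ∂μ‖ := by rw [mul_comm]; exact part1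
      _ ≤ ∫ x in S, ‖u x‖ ∂μ := norm_integral_le_integral_norm _
      _ = ∫ x in S, |x - lam0|⁻¹ * ‖w x‖ ∂μ := hSnorm
      _ ≤ (∫ x in S, (|x - lam0|⁻¹) ^ 2 ∂μ) ^ ((1:ℝ)/2) *
            (∫ x in S, ‖w x‖ ^ 2 ∂μ) ^ ((1:ℝ)/2) := by
          exact hCS
      _ ≤ K ^ ((1:ℝ)/2) * V ^ ((1:ℝ)/2) := by
          gcongr <;> first
            | exact hfS0
            | exact hfS
            | exact hgS0
            | exact hgS
      _ = Real.sqrt K * Real.sqrt V := by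
          rw [Real.sqrt_eq_rpow, Real.sqrt_eq_rpow]
  -- split the L² norm
  have hB2 : ∫ x in Sᶜ, ‖u x‖ ^ 2 ∂μ = m * ‖u lam0‖ ^ 2 := by
    rw [setIntegral_congr_set hae, integral_singleton, smul_eq_mul, measureReal_def, hmdef]
  have hS2 : ∫ x in S, ‖u x‖ ^ 2 ∂μ ≤ ε⁻¹ ^ 2 * V := by
    calc ∫ x in S, ‖u x‖ ^ 2 ∂μ
        ≤ ∫ x in S, ε⁻¹ ^ 2 * ‖w x‖ ^ 2 ∂μ := by
          refine setIntegral_mono_on hu2.integrableOn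
            ((hw2.const_mul _).integrableOn) hSmeas fun x hx => ?_
          have hxS : ε ≤ |x - lam0| := by rw [hSdef] at hx; exact hx
          rw [hnormw x, mul_pow]
          have h1 : ε ^ 2 * ‖u x‖ ^ 2 ≤ |x - lam0| ^ 2 * ‖u x‖ ^ 2 := by
            nlinarith [mul_nonneg (mul_nonneg (sub_nonneg.mpr hxS)
              (by positivity : (0:ℝ) ≤ |x - lam0| + ε)) (sq_nonneg ‖u x‖)]
          calc ‖u x‖ ^ 2 = ε⁻¹ ^ 2 * (ε ^ 2 * ‖u x‖ ^ 2) := by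
                field_simp
            _ ≤ ε⁻¹ ^ 2 * (|x - lam0| ^ 2 * ‖u x‖ ^ 2) := by
                have : (0:ℝ) ≤ ε⁻¹ ^ 2 := by positivity
                exact mul_le_mul_of_nonneg_left h1 this
      _ ≤ ∫ x, ε⁻¹ ^ 2 * ‖w x‖ ^ 2 ∂μ := by
          refine setIntegral_le_integral (hw2.const_mul _) ?_
          filter_upwards with x
          positivity
      _ = ε⁻¹ ^ 2 * V := by rw [integral_const_mul, hVdef]
  have hB2le : ∫ x in Sᶜ, ‖u x‖ ^ 2 ∂μ ≤ K / m * V := by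
    rw [hB2]
    have h9 : (m * ‖u lam0‖) ^ 2 ≤ K * V := by
      calc (m * ‖u lam0‖) ^ 2 ≤ (Real.sqrt K * Real.sqrt V) ^ 2 := by
            have h0 : 0 ≤ m * ‖u lam0‖ := mul_nonneg hm.le (norm_nonneg _)
            exact pow_le_pow_left₀ h0 hchain 2
        _ = K * V := by
            rw [mul_pow, Real.sq_sqrt hK.le, Real.sq_sqrt hV]
    have heq : m * ‖u lam0‖ ^ 2 = (m * ‖u lam0‖) ^ 2 / m := by
      rw [eq_div_iff hm.ne']
      ring
    rw [heq, div_mul_eq_mul_div]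
    gcongr
  have hA : ∫ x, ‖u x‖ ^ 2 ∂μ ≤ (ε⁻¹ ^ 2 + K / m) * V := by
    rw [← integral_add_compl hSmeas hu2]
    calc (∫ x in S, ‖u x‖ ^ 2 ∂μ) + ∫ x in Sᶜ, ‖u x‖ ^ 2 ∂μ
        ≤ ε⁻¹ ^ 2 * V + K / m * V := add_le_add hS2 hB2le
      _ = (ε⁻¹ ^ 2 + K / m) * V := by ring
  calc Real.sqrt (∫ x, ‖u x‖ ^ 2 ∂μ) ≤ Real.sqrt ((ε⁻¹ ^ 2 + K / m) * V) :=
        Real.sqrt_le_sqrt hA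
    _ = Real.sqrt (ε⁻¹ ^ 2 + K / m) * Real.sqrt V := Real.sqrt_mul (by positivity) V
end

section
/- Let z ∈ ℂ with Im z > 0 and μ a Borel measure on ℝ with ∫ (1+λ²)⁻¹ dμ = 1. Define M(z) = ∫ (1/(λ-z) - λ/(1+λ²)) dμ(λ). Then (z-i)·∫ dμ(λ)/((λ-z)(λ-i)) = M(z) - i and (z+i)·∫ dμ(λ)/((λ-z)(λ+i)) = M(z) + i; consequently, ((z-i)·∫ dμ/((λ-z)(λ-i))) / ((z+i)·∫ dμ/((λ-z)(λ+i))) = (M(z)-i)/(M(z)+i). -/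
/-!
For `a = ±i` one has `(x - a)⁻¹ = (x + a) / (1 + x²)`, so the integrand of `M(z)` splits as
`(z - a) / ((x - z) (x - a)) + a / (1 + x²)`. Both summands are `O((1 + x²)⁻¹)` on the real line
because `|x - z|² ≳ 1 + x²` when `Im z ≠ 0`; integrating and using `∫ (1 + x²)⁻¹ dμ = 1` gives
`(z - a) ∫ dμ / ((x - z)(x - a)) = M(z) - a`.
-/

open MeasureTheory Complex

lemma ofReal_sub_ne_zero_of_im_ne_zero {z : ℂ} (hz : z.im ≠ 0) (x : ℝ) : (x : ℂ) - z ≠ 0 :=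
  sub_ne_zero.2 fun h => hz (by simp [← h])

lemma one_add_ofReal_sq_ne_zero (x : ℝ) : 1 + (x : ℂ) ^ 2 ≠ 0 := by
  exact_mod_cast (by positivity : (1 + x ^ 2 : ℝ) ≠ 0)

lemma im_ne_zero_of_sq_eq_neg_one {a : ℂ} (ha : a ^ 2 = -1) : a.im ≠ 0 := by
  intro h
  have hre := congrArg re ha
  simp only [sq, mul_re, h, mul_zero, sub_zero, neg_re, one_re] at hre
  nlinarith [sq_nonneg a.re]

lemma one_add_sq_le_mul_normSq_sub {z : ℂ} (hz : z.im ≠ 0) :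
    ∃ C, ∀ x : ℝ, 1 + x ^ 2 ≤ C * normSq ((x : ℂ) - z) := by
  refine ⟨2 + (1 + 2 * z.re ^ 2) / z.im ^ 2, fun x => ?_⟩
  have him : (1 + 2 * z.re ^ 2) / z.im ^ 2 * z.im ^ 2 = 1 + 2 * z.re ^ 2 :=
    div_mul_cancel₀ _ (pow_ne_zero 2 hz)
  have hnormSq : normSq ((x : ℂ) - z) = (x - z.re) ^ 2 + z.im ^ 2 := by
    simp only [normSq_apply, sub_re, ofReal_re, sub_im, ofReal_im, zero_sub, mul_neg, neg_mul,
      neg_neg]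
    ring
  rw [hnormSq]
  nlinarith [sq_nonneg (x - 2 * z.re), sq_nonneg (x - z.re),
    mul_nonneg (div_nonneg (by positivity : (0 : ℝ) ≤ 1 + 2 * z.re ^ 2) (sq_nonneg z.im))
      (sq_nonneg (x - z.re))]

lemma sq_norm_inv_ofReal_sub_le {z : ℂ} (hz : z.im ≠ 0) :
    ∃ C, ∀ x : ℝ, ‖((x : ℂ) - z)⁻¹‖ ^ 2 ≤ C * (1 + x ^ 2)⁻¹ := by
  obtain ⟨C, hC⟩ := one_add_sq_le_mul_normSq_sub hz
  refine ⟨C, fun x => ?_⟩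
  have hpos : 0 < normSq ((x : ℂ) - z) := normSq_pos.2 (ofReal_sub_ne_zero_of_im_ne_zero hz x)
  rw [norm_inv, inv_pow, Complex.sq_norm, le_mul_inv_iff₀ (by positivity),
    inv_mul_le_iff₀ hpos, mul_comm]
  exact hC x

lemma integrable_inv_ofReal_sub_mul_ofReal_sub {μ : Measure ℝ}
    (hw : Integrable (fun x : ℝ => (1 + x ^ 2)⁻¹) μ) {z a : ℂ} (hz : z.im ≠ 0) (ha : a.im ≠ 0) :
    Integrable (fun x : ℝ => (((x : ℂ) - z) * ((x : ℂ) - a))⁻¹) μ := by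
  obtain ⟨C, hC⟩ := sq_norm_inv_ofReal_sub_le hz
  obtain ⟨D, hD⟩ := sq_norm_inv_ofReal_sub_le ha
  refine (hw.const_mul ((C + D) / 2)).mono' (Measurable.aestronglyMeasurable (by fun_prop))
    (.of_forall fun x => ?_)
  rw [mul_inv, norm_mul]
  nlinarith [hC x, hD x, two_mul_le_add_sq ‖((x : ℂ) - z)⁻¹‖ ‖((x : ℂ) - a)⁻¹‖]

lemma inv_sub_sub_div_one_add_sq {x z a : ℂ} (ha : a ^ 2 = -1) (hxz : x - z ≠ 0)
    (hx : 1 + x ^ 2 ≠ 0) :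
    (x - z)⁻¹ - x / (1 + x ^ 2) = (z - a) * ((x - z) * (x - a))⁻¹ + a * (1 + x ^ 2)⁻¹ := by
  have hxa : x - a ≠ 0 := by
    rintro h
    apply hx
    linear_combination (x + a) * h + ha
  field_simp
  linear_combination (x - z) * ha

lemma mul_integral_inv_ofReal_sub_mul_ofReal_sub {μ : Measure ℝ}
    (hw : Integrable (fun x : ℝ => (1 + x ^ 2)⁻¹) μ) {z a : ℂ} (hz : z.im ≠ 0) (ha : a ^ 2 = -1) :
    (z - a) * ∫ x, (((x : ℂ) - z) * ((x : ℂ) - a))⁻¹ ∂μ =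
      (∫ x, (((x : ℂ) - z)⁻¹ - (x : ℂ) / (1 + (x : ℂ) ^ 2)) ∂μ) -
        a * ((∫ x, (1 + x ^ 2)⁻¹ ∂μ : ℝ) : ℂ) := by
  have hweight : ∫ x, (1 + (x : ℂ) ^ 2)⁻¹ ∂μ = ((∫ x, (1 + x ^ 2)⁻¹ ∂μ : ℝ) : ℂ) := by
    rw [← integral_complex_ofReal]; push_cast; rfl
  have hpartial : ∫ x, (((x : ℂ) - z)⁻¹ - (x : ℂ) / (1 + (x : ℂ) ^ 2)) ∂μ =
      ∫ x, ((z - a) * (((x : ℂ) - z) * ((x : ℂ) - a))⁻¹ + a * (1 + (x : ℂ) ^ 2)⁻¹) ∂μ :=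
    integral_congr_ae (.of_forall fun x => inv_sub_sub_div_one_add_sq ha
      (ofReal_sub_ne_zero_of_im_ne_zero hz x) (one_add_ofReal_sq_ne_zero x))
  have hwℂ : Integrable (fun x : ℝ => (1 + (x : ℂ) ^ 2)⁻¹) μ := by
    simpa using hw.ofReal (𝕜 := ℂ)
  rw [hpartial, integral_add, integral_const_mul, integral_const_mul, hweight,
    add_sub_cancel_right]
  · exact (integrable_inv_ofReal_sub_mul_ofReal_sub hw hz
      (im_ne_zero_of_sq_eq_neg_one ha)).const_mul _
  · exact hwℂ.const_mul _

theorem livsic_via_weyl_titchmarsh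
    (μ : Measure ℝ)
    (hnorm : ∫ x, (1 + x ^ 2)⁻¹ ∂μ = 1)
    (z : ℂ) (hz : 0 < z.im) :
    (z - I) * (∫ x, (((x : ℂ) - z) * ((x : ℂ) - I))⁻¹ ∂μ) =
        (∫ x, (((x : ℂ) - z)⁻¹ - (x : ℂ) / (1 + (x : ℂ) ^ 2)) ∂μ) - I ∧
      (z + I) * (∫ x, (((x : ℂ) - z) * ((x : ℂ) + I))⁻¹ ∂μ) =
        (∫ x, (((x : ℂ) - z)⁻¹ - (x : ℂ) / (1 + (x : ℂ) ^ 2)) ∂μ) + I ∧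
      ((z - I) * (∫ x, (((x : ℂ) - z) * ((x : ℂ) - I))⁻¹ ∂μ)) /
          ((z + I) * (∫ x, (((x : ℂ) - z) * ((x : ℂ) + I))⁻¹ ∂μ)) =
        ((∫ x, (((x : ℂ) - z)⁻¹ - (x : ℂ) / (1 + (x : ℂ) ^ 2)) ∂μ) - I) /
          ((∫ x, (((x : ℂ) - z)⁻¹ - (x : ℂ) / (1 + (x : ℂ) ^ 2)) ∂μ) + I) := by
  have hw : Integrable (fun x : ℝ => (1 + x ^ 2)⁻¹) μ :=
    .of_integral_ne_zero (by rw [hnorm]; exact one_ne_zero)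
  have hminus := mul_integral_inv_ofReal_sub_mul_ofReal_sub hw hz.ne' I_sq
  have hplus := mul_integral_inv_ofReal_sub_mul_ofReal_sub hw hz.ne' (a := -I) (by simp)
  simp only [hnorm, ofReal_one, mul_one, sub_neg_eq_add] at hminus hplus
  exact ⟨hminus, hplus, by rw [hminus, hplus]⟩
end
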